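/- Let H : ℝⁿ ⇉ ℝⁿ be a convex process and let R = R(H) be its reachable set. If dom(H) − R is a linear subspace, then R − R = R₊, where R₊ = R(L₊) is the reachable set of the maximal linear process L₊ associated with H. -/

import Mathlib

/-! Differences of two `H`-trajectories are `L₊`-trajectories, so `R - R ⊆ R₊` for every convex
process. Conversely `R - R` contains `0` and is invariant under `L₊` once `dom H - R` is a
subspace, hence contains `R₊`. -/

open Pointwise Set RealInnerProductSpace

namespace ConvexProcessPaper

/-- A convex cone: a nonempty convex set closed under nonnegative scalar multiplication. -/
def IsConvexCone {V : Type*} [AddCommMonoid V] [Module ℝ V] (S : Set V) : Prop :=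
  S.Nonempty ∧ Convex ℝ S ∧ ∀ c : ℝ, 0 ≤ c → ∀ x ∈ S, c • x ∈ S

/-- A set is a linear subspace. -/
def IsLinearSubspace {V : Type*} [AddCommGroup V] [Module ℝ V] (S : Set V) : Prop :=
  ∃ W : Submodule ℝ V, (W : Set V) = S

/-- Set-valued maps from ℝⁿ to ℝⁿ. -/
abbrev SVMap (n : ℕ) := EuclideanSpace ℝ (Fin n) → Set (EuclideanSpace ℝ (Fin n))

variable {n : ℕ}

/-- The graph of a set-valued map. -/
def graph (H : SVMap n) : Set (EuclideanSpace ℝ (Fin n) × EuclideanSpace ℝ (Fin n)) :=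
  {p | p.2 ∈ H p.1}

/-- A convex process: a set-valued map whose graph is a convex cone. -/
def IsConvexProcess (H : SVMap n) : Prop := IsConvexCone (graph H)

/-- The domain of a set-valued map. -/
def dom (H : SVMap n) : Set (EuclideanSpace ℝ (Fin n)) := {x | (H x).Nonempty}

/-- The image of a set-valued map. -/
def im (H : SVMap n) : Set (EuclideanSpace ℝ (Fin n)) := {y | ∃ x, y ∈ H x}

/-- The inverse of a set-valued map: gr(H⁻¹) = {(y,x) : (x,y) ∈ gr(H)}. -/
def invMap (H : SVMap n) : SVMap n := fun y => {x | y ∈ H x}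

/-- The image of a set under a set-valued map: H(S) = ⋃_{x ∈ S} H(x). -/
def imSet (H : SVMap n) (S : Set (EuclideanSpace ℝ (Fin n))) :
    Set (EuclideanSpace ℝ (Fin n)) := ⋃ x ∈ S, H x

/-- The reachable set: R(H) = ⋃_{ℓ ≥ 0} H^ℓ({0}). -/
def reach (H : SVMap n) : Set (EuclideanSpace ℝ (Fin n)) := ⋃ ℓ : ℕ, (imSet H)^[ℓ] {0}

/-- The null-controllable set: N(H) = R(H⁻¹). -/
def nullc (H : SVMap n) : Set (EuclideanSpace ℝ (Fin n)) := reach (invMap H)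

/-- The feasible set: states from which an infinite trajectory emanates. -/
def feas (H : SVMap n) : Set (EuclideanSpace ℝ (Fin n)) :=
  {ξ | ∃ x : ℕ → EuclideanSpace ℝ (Fin n), x 0 = ξ ∧ ∀ k, x (k + 1) ∈ H (x k)}

/-- The minimal linear process L₋: gr(L₋) = lin(gr(H)) = gr(H) ∩ (−gr(H)). -/
def Lminus (H : SVMap n) : SVMap n := fun x => {y | y ∈ H x ∧ -y ∈ H (-x)}

/-- The maximal linear process L₊: gr(L₊) = Lin(gr(H)) = gr(H) − gr(H). -/
def Lplus (H : SVMap n) : SVMap n :=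
  fun x => {y | ∃ x₁ y₁ x₂ y₂, y₁ ∈ H x₁ ∧ y₂ ∈ H x₂ ∧ x = x₁ - x₂ ∧ y = y₁ - y₂}

/-- The negative dual process: p ∈ H⁻(q) ⇔ ⟨p,x⟩ ≥ ⟨q,y⟩ for all (x,y) ∈ gr(H). -/
def negDual (H : SVMap n) : SVMap n :=
  fun q => {p | ∀ x y, y ∈ H x → ⟪q, y⟫ ≤ ⟪p, x⟫}

/-- The positive dual process: p ∈ H⁺(q) ⇔ ⟨p,x⟩ ≤ ⟨q,y⟩ for all (x,y) ∈ gr(H). -/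
def posDual (H : SVMap n) : SVMap n :=
  fun q => {p | ∀ x y, y ∈ H x → ⟪p, x⟫ ≤ ⟪q, y⟫}

/-- The negative polar cone of a set. -/
def negPolar (C : Set (EuclideanSpace ℝ (Fin n))) : Set (EuclideanSpace ℝ (Fin n)) :=
  {y | ∀ x ∈ C, ⟪x, y⟫ ≤ 0}

/-- The positive polar cone of a set. -/
def posPolar (C : Set (EuclideanSpace ℝ (Fin n))) : Set (EuclideanSpace ℝ (Fin n)) :=
  {y | ∀ x ∈ C, 0 ≤ ⟪x, y⟫}

/-- C is weakly H invariant: H(x) ∩ C ≠ ∅ for all x ∈ C. -/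
def WeaklyInv (H : SVMap n) (C : Set (EuclideanSpace ℝ (Fin n))) : Prop :=
  ∀ x ∈ C, (H x ∩ C).Nonempty

/-- C is strongly H invariant: H(x) ⊆ C for all x ∈ C. -/
def StronglyInv (H : SVMap n) (C : Set (EuclideanSpace ℝ (Fin n))) : Prop :=
  ∀ x ∈ C, H x ⊆ C

/-- H is reachable: every feasible state is reachable. -/
def IsReachable (H : SVMap n) : Prop := feas H ⊆ reach H

/-- H is null-controllable: every feasible state is null-controllable. -/
def IsNullControllable (H : SVMap n) : Prop := feas H ⊆ nullc H

theorem IsConvexCone.zero_mem {V : Type*} [AddCommMonoid V] [Module ℝ V] {S : Set V}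
    (hS : IsConvexCone S) : (0 : V) ∈ S := by
  obtain ⟨x, hx⟩ := hS.1
  simpa using hS.2.2 0 le_rfl x hx

theorem IsConvexCone.add_mem {V : Type*} [AddCommMonoid V] [Module ℝ V] {S : Set V}
    (hS : IsConvexCone S) {x y : V} (hx : x ∈ S) (hy : y ∈ S) : x + y ∈ S := by
  have hmid := hS.2.1 hx hy (by norm_num : (0 : ℝ) ≤ 1 / 2) (by norm_num : (0 : ℝ) ≤ 1 / 2)
    (by norm_num)
  have h := hS.2.2 2 (by norm_num) _ hmid
  rwa [smul_add, smul_smul, smul_smul, show (2 : ℝ) * (1 / 2) = 1 by norm_num, one_smul,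
    one_smul] at h

theorem IsLinearSubspace.neg_mem {V : Type*} [AddCommGroup V] [Module ℝ V] {S : Set V}
    (hS : IsLinearSubspace S) {x : V} (hx : x ∈ S) : -x ∈ S := by
  obtain ⟨W, rfl⟩ := hS
  exact W.neg_mem hx

theorem IsConvexProcess.zero_mem_zero {H : SVMap n} (hH : IsConvexProcess H) : 0 ∈ H 0 :=
  IsConvexCone.zero_mem (S := graph H) hH

theorem IsConvexProcess.add_mem_add {H : SVMap n} (hH : IsConvexProcess H)
    {x u y v : EuclideanSpace ℝ (Fin n)} (hy : y ∈ H x) (hv : v ∈ H u) : y + v ∈ H (x + u) :=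
  IsConvexCone.add_mem (S := graph H) hH (x := (x, y)) (y := (u, v)) hy hv

theorem mem_imSet {H : SVMap n} {S : Set (EuclideanSpace ℝ (Fin n))}
    {y : EuclideanSpace ℝ (Fin n)} : y ∈ imSet H S ↔ ∃ x ∈ S, y ∈ H x := by
  simp [imSet]

theorem imSet_mono (H : SVMap n) : Monotone (imSet H) := fun _ _ hST _ hy =>
  let ⟨x, hx, hyx⟩ := mem_imSet.1 hy
  mem_imSet.2 ⟨x, hST hx, hyx⟩

theorem mem_reach {H : SVMap n} {x : EuclideanSpace ℝ (Fin n)} :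
    x ∈ reach H ↔ ∃ ℓ, x ∈ (imSet H)^[ℓ] {0} := by
  simp [reach]

theorem zero_mem_reach (H : SVMap n) : 0 ∈ reach H :=
  mem_reach.2 ⟨0, rfl⟩

theorem subset_reach_of_mem_reach {H : SVMap n} {x : EuclideanSpace ℝ (Fin n)}
    (hx : x ∈ reach H) : H x ⊆ reach H := by
  obtain ⟨ℓ, hℓ⟩ := mem_reach.1 hx
  refine fun y hy => mem_reach.2 ⟨ℓ + 1, ?_⟩
  rw [Function.iterate_succ_apply']
  exact mem_imSet.2 ⟨x, hℓ, hy⟩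

theorem reach_subset_of_invariant {H : SVMap n} {S : Set (EuclideanSpace ℝ (Fin n))}
    (h0 : 0 ∈ S) (hS : ∀ x ∈ S, H x ⊆ S) : reach H ⊆ S := by
  have hiter : ∀ ℓ : ℕ, (imSet H)^[ℓ] {0} ⊆ S := by
    intro ℓ
    induction ℓ with
    | zero => simpa using h0
    | succ ℓ ih =>
      intro y hy
      rw [Function.iterate_succ_apply'] at hy
      obtain ⟨x, hx, hyx⟩ := mem_imSet.1 hy
      exact hS x (ih hx) hyx
  exact iUnion_subset hiter

/-- Lets finitely many reachable points be reached at a common time. -/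
theorem monotone_iterate_imSet_zero {H : SVMap n} (h0 : 0 ∈ H 0) :
    Monotone fun ℓ : ℕ => (imSet H)^[ℓ] {0} := by
  refine monotone_nat_of_le_succ fun ℓ => ?_
  rw [Function.iterate_succ_apply]
  exact (imSet_mono H).iterate ℓ (singleton_subset_iff.2 (mem_imSet.2 ⟨0, rfl, h0⟩))

theorem map₂_mem_reach {F G K : SVMap n}
    (f : EuclideanSpace ℝ (Fin n) → EuclideanSpace ℝ (Fin n) → EuclideanSpace ℝ (Fin n))
    (hF : 0 ∈ F 0) (hG : 0 ∈ G 0) (hf0 : f 0 0 = 0)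
    (hf : ∀ x u y v, y ∈ F x → v ∈ G u → f y v ∈ K (f x u))
    {a b : EuclideanSpace ℝ (Fin n)} (ha : a ∈ reach F) (hb : b ∈ reach G) :
    f a b ∈ reach K := by
  have hiter : ∀ ℓ : ℕ, ∀ a ∈ (imSet F)^[ℓ] {0}, ∀ b ∈ (imSet G)^[ℓ] {0},
      f a b ∈ (imSet K)^[ℓ] {0} := by
    intro ℓ
    induction ℓ with
    | zero =>
      rintro a rfl b rfl
      exact hf0
    | succ ℓ ih =>
      intro a ha b hb
      rw [Function.iterate_succ_apply'] at ha hb ⊢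
      obtain ⟨x, hx, hax⟩ := mem_imSet.1 ha
      obtain ⟨u, hu, hbu⟩ := mem_imSet.1 hb
      exact mem_imSet.2 ⟨f x u, ih x hx u hu, hf x u a b hax hbu⟩
  obtain ⟨k, hk⟩ := mem_reach.1 ha
  obtain ⟨ℓ, hℓ⟩ := mem_reach.1 hb
  exact mem_reach.2 ⟨max k ℓ, hiter _ a (monotone_iterate_imSet_zero hF (le_max_left k ℓ) hk)
    b (monotone_iterate_imSet_zero hG (le_max_right k ℓ) hℓ)⟩

theorem IsConvexProcess.add_mem_reach {H : SVMap n} (hH : IsConvexProcess H)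
    {a b : EuclideanSpace ℝ (Fin n)} (ha : a ∈ reach H) (hb : b ∈ reach H) :
    a + b ∈ reach H :=
  map₂_mem_reach (· + ·) hH.zero_mem_zero hH.zero_mem_zero (add_zero 0)
    (fun _ _ _ _ => hH.add_mem_add) ha hb

theorem IsConvexProcess.reach_sub_reach_subset_reach_Lplus {H : SVMap n}
    (hH : IsConvexProcess H) : reach H - reach H ⊆ reach (Lplus H) := by
  rintro _ ⟨a, ha, b, hb, rfl⟩
  refine map₂_mem_reach (· - ·) hH.zero_mem_zero hH.zero_mem_zero (sub_zero 0) ?_ ha hb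
  exact fun x u y v hy hv => show y - v ∈ Lplus H (x - u) from ⟨x, y, u, v, hy, hv, rfl, rfl⟩

/-- The subspace hypothesis supplies `d ∈ dom H`, `r ∈ R` with `x₁ + d = r₁ + r`, where
`u = x₁ - x₂ = r₁ - r₂`; then also `x₂ + d = r₂ + r`, and adding one `z ∈ H d` to both `yᵢ ∈ H xᵢ`
gives points of `H (rᵢ + r) ⊆ R` with difference `y₁ - y₂`. -/
theorem IsConvexProcess.Lplus_subset_reach_sub_reach {H : SVMap n} (hH : IsConvexProcess H)
    (hsub : IsLinearSubspace (dom H - reach H)) {u : EuclideanSpace ℝ (Fin n)}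
    (hu : u ∈ reach H - reach H) : Lplus H u ⊆ reach H - reach H := by
  rintro _ ⟨x₁, y₁, x₂, y₂, hy₁, hy₂, rfl, rfl⟩
  obtain ⟨r₁, hr₁, r₂, hr₂, hu⟩ := mem_sub.1 hu
  obtain ⟨d, ⟨z, hz⟩, r, hr, hdr⟩ := mem_sub.1 (hsub.neg_mem (sub_mem_sub ⟨y₁, hy₁⟩ hr₁))
  have he₁ : x₁ + d = r₁ + r := by
    rw [sub_eq_iff_eq_add.1 hdr]
    abel
  have he₂ : x₂ + d = r₂ + r :=
    calc x₂ + d = (x₁ + d) - (x₁ - x₂) := by abel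
      _ = r₂ + r := by rw [he₁, ← hu]; abel
  refine ⟨y₁ + z, ?_, y₂ + z, ?_, add_sub_add_right_eq_sub y₁ y₂ z⟩
  · exact subset_reach_of_mem_reach (hH.add_mem_reach hr₁ hr) (he₁ ▸ hH.add_mem_add hy₁ hz)
  · exact subset_reach_of_mem_reach (hH.add_mem_reach hr₂ hr) (he₂ ▸ hH.add_mem_add hy₂ hz)

/-- if dom(H) − R(H) is a subspace then R(H) − R(H) = R₊. -/
theorem reach_sub_reach_eq_Rplus {n : ℕ} (H : SVMap n) (hH : IsConvexProcess H)
    (hsub : IsLinearSubspace (dom H - reach H)) :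
    reach H - reach H = reach (Lplus H) :=
  hH.reach_sub_reach_subset_reach_Lplus.antisymm <|
    reach_subset_of_invariant (mem_sub.2 ⟨0, zero_mem_reach H, 0, zero_mem_reach H, sub_zero 0⟩)
      fun _ hu => hH.Lplus_subset_reach_sub_reach hsub hu

end ConvexProcessPaper
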